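/- If G is a vertex-transitive (d,k;+1)-digraph with d ≥ 2, then (k+1) divides d·(M(d,k)+1) = 2d + d^2 + ... + d^{k+1}. -/

import Mathlib

/-- `IsWalk A w` means the nonempty list `w` of vertices is a directed walk
in the digraph with adjacency relation `A`. -/
def IsWalk {V : Type*} (A : V → V → Prop) : List V → Prop
  | [] => False
  | [_] => True
  | a :: b :: l => A a b ∧ IsWalk A (b :: l)

/-- `WalkFrom A u v w` means `w` is a directed walk from `u` to `v`.
A walk represented by a list of length `n+1` has length `n` as a walk. -/
def WalkFrom {V : Type*} (A : V → V → Prop) (u v : V) (w : List V) : Prop :=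
  IsWalk A w ∧ w.head? = some u ∧ w.getLast? = some v

/-- A digraph is `k`-geodetic if for any (not necessarily distinct) vertices
`u, v` there is at most one directed walk from `u` to `v` of length `≤ k`. -/
def KGeodetic {V : Type*} (A : V → V → Prop) (k : ℕ) : Prop :=
  ∀ u v : V, ∀ w₁ w₂ : List V, WalkFrom A u v w₁ → WalkFrom A u v w₂ →
    w₁.length ≤ k + 1 → w₂.length ≤ k + 1 → w₁ = w₂

/-- `ReachIn A k u v` means there is a directed walk from `u` to `v` of
length at most `k`. -/
def ReachIn {V : Type*} (A : V → V → Prop) (k : ℕ) (u v : V) : Prop :=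
  ∃ w : List V, WalkFrom A u v w ∧ w.length ≤ k + 1

/-- The directed Moore bound `M(d,k) = 1 + d + d^2 + ... + d^k`. -/
def mooreBound (d k : ℕ) : ℕ := ∑ i ∈ Finset.range (k + 1), d ^ i

/-- `o` is the outlier function of a `k`-geodetic digraph with excess one:
for each vertex `u`, `o u` is the unique vertex not reachable from `u` by a
walk of length at most `k`. -/
def IsOutlierFn {V : Type*} (A : V → V → Prop) (k : ℕ) (o : V → V) : Prop :=
  ∀ u v : V, ¬ ReachIn A k u v ↔ v = o u

/-! If some vertex `u` had an arc `o u → u`, then, automorphisms commuting with the outlier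
map, every vertex would; for an arc `u → w` the walks `o u → u → w` and `o u → o w → w` would
then coincide, so `o` would map all `d ≥ 2` out-neighbours of `u` to `u`. Hence every arc
`u → v` closes up: `u` is reachable from `v` within `k` steps, and then in exactly `k`.

So the closed walks of length `k + 1`, indexed by `ZMod (k + 1)`, are in bijection with the arcs
via their first arc, and rotation is a free action of `ZMod (k + 1)` on them (a shorter period
would give a nontrivial closed walk of length at most `k`). Hence `k + 1` divides the number
`d · |V|` of arcs. -/

section Walk

variable {V : Type*} {A : V → V → Prop}

lemma walkFrom_singleton (u : V) : WalkFrom A u u [u] :=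
  ⟨trivial, rfl, rfl⟩

lemma walkFrom_cons {u v x : V} {w : List V} (huv : A u v) (hw : WalkFrom A v x w) :
    WalkFrom A u x (u :: w) := by
  obtain ⟨hwalk, hhead, hlast⟩ := hw
  match w, hhead with
  | b :: t, hhead =>
    obtain rfl : b = v := by simpa using hhead
    exact ⟨⟨huv, hwalk⟩, rfl, by simpa [List.getLast?_cons_cons] using hlast⟩

lemma IsWalk.adj_getElem : ∀ {w : List V}, IsWalk A w →
    ∀ {i : ℕ} (hi : i + 1 < w.length), A w[i] w[i + 1]
  | _ :: _ :: _, hw, 0, _ => hw.1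
  | _ :: b :: t, hw, i + 1, hi => IsWalk.adj_getElem (w := b :: t) hw.2 (by simpa using hi)

lemma walkFrom_map_range (f : ℕ → V) :
    ∀ (m : ℕ), (∀ t < m, A (f t) (f (t + 1))) →
      WalkFrom A (f 0) (f m) ((List.range (m + 1)).map f)
  | 0, _ => by simpa using walkFrom_singleton (A := A) (f 0)
  | m + 1, hf => by
    rw [List.range_succ_eq_map, List.map_cons, List.map_map]
    exact walkFrom_cons (hf 0 (by omega))
      (walkFrom_map_range (f ∘ Nat.succ) m fun t ht => hf (t + 1) (by omega))

lemma IsWalk.map {B : V → V → Prop} (φ : V → V) (hφ : ∀ a b, A a b → B (φ a) (φ b)) :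
    ∀ {w : List V}, IsWalk A w → IsWalk B (w.map φ)
  | [_], _ => trivial
  | _ :: b :: t, hw => ⟨hφ _ _ hw.1, IsWalk.map φ hφ (w := b :: t) hw.2⟩

lemma ReachIn.map {B : V → V → Prop} {k : ℕ} {u v : V} (φ : V → V)
    (hφ : ∀ a b, A a b → B (φ a) (φ b)) : ReachIn A k u v → ReachIn B k (φ u) (φ v) := by
  rintro ⟨w, ⟨hw, hhead, hlast⟩, hlen⟩
  exact ⟨w.map φ, ⟨hw.map φ hφ, by simp [hhead], by simp [hlast]⟩, by simpa using hlen⟩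

lemma KGeodetic.eq_singleton_of_walkFrom {k : ℕ} (hgeo : KGeodetic A k) {u : V} {w : List V}
    (hw : WalkFrom A u u w) (hlen : w.length ≤ k + 1) : w = [u] :=
  hgeo u u w [u] hw (walkFrom_singleton u) hlen (by simp)

end Walk

lemma apply_mod_eq_of_le {V : Type*} {n : ℕ} {g : ℕ → V} (hper : g n = g 0) {j : ℕ} (hj : j ≤ n) :
    g (j % n) = g j := by
  rcases hj.lt_or_eq with hj | rfl
  · rw [Nat.mod_eq_of_lt hj]
  · rw [Nat.mod_self, hper]

abbrev Arc {V : Type*} (A : V → V → Prop) : Type _ := {p : V × V // A p.1 p.2}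

def ClosedWalk {V : Type*} (A : V → V → Prop) (n : ℕ) : Type _ :=
  {c : ZMod n → V // ∀ i, A (c i) (c (i + 1))}

namespace ClosedWalk

variable {V : Type*} {A : V → V → Prop} {n : ℕ}

instance : CoeFun (ClosedWalk A n) fun _ => ZMod n → V := ⟨Subtype.val⟩

lemma adj (c : ClosedWalk A n) (i : ZMod n) : A (c i) (c (i + 1)) := c.2 i

@[ext] lemma ext {c c' : ClosedWalk A n} (h : ∀ i, c i = c' i) : c = c' :=
  Subtype.ext (funext h)

instance : VAdd (ZMod n) (ClosedWalk A n) :=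
  ⟨fun j c => ⟨fun i => c (i + j), fun i => by simpa only [add_right_comm] using c.adj (i + j)⟩⟩

@[simp] lemma vadd_apply (j : ZMod n) (c : ClosedWalk A n) (i : ZMod n) :
    (j +ᵥ c) i = c (i + j) := rfl

instance : AddAction (ZMod n) (ClosedWalk A n) where
  zero_vadd c := ext fun i => by simp
  add_vadd j j' c := ext fun i => by simp [add_comm j, add_assoc]

lemma walkFrom_range (c : ClosedWalk A n) (i : ZMod n) (m : ℕ) :
    WalkFrom A (c i) (c (i + m)) ((List.range (m + 1)).map fun t : ℕ => c (i + t)) := by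
  simpa using walkFrom_map_range (A := A) (fun t : ℕ => c (i + t)) m fun t _ => by
    simpa [add_assoc] using c.adj (i + t)

def ofNat [NeZero n] (g : ℕ → V) (hper : g n = g 0) (hadj : ∀ j < n, A (g j) (g (j + 1))) :
    ClosedWalk A n :=
  ⟨fun i => g i.val, fun i => by
    have hi : i + 1 = ((i.val + 1 : ℕ) : ZMod n) := by push_cast [ZMod.natCast_zmod_val]; rfl
    change A (g i.val) (g (i + 1).val)
    rw [hi, ZMod.val_natCast, apply_mod_eq_of_le hper (ZMod.val_lt i)]
    exact hadj _ (ZMod.val_lt i)⟩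

lemma ofNat_apply_natCast [NeZero n] {g : ℕ → V} (hper : g n = g 0)
    (hadj : ∀ j < n, A (g j) (g (j + 1))) {j : ℕ} (hj : j ≤ n) :
    ofNat g hper hadj j = g j :=
  (congrArg g (ZMod.val_natCast n j)).trans (apply_mod_eq_of_le hper hj)

section Geodetic

variable {k : ℕ}

lemma stabilizer_eq_bot (hgeo : KGeodetic A k) (c : ClosedWalk A (k + 1)) :
    AddAction.stabilizer (ZMod (k + 1)) c = ⊥ := by
  refine (AddSubgroup.eq_bot_iff_forall _).2 fun j hj => ?_
  have hfix : c j = c 0 := by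
    simpa using congrArg (· 0) (AddAction.mem_stabilizer_iff.1 hj)
  have hw := c.walkFrom_range 0 j.val
  rw [ZMod.natCast_zmod_val, zero_add, hfix] at hw
  have hlen := congrArg List.length (hgeo.eq_singleton_of_walkFrom hw
    (by simpa using Nat.lt_succ_iff.1 (ZMod.val_lt j)))
  simp only [List.length_map, List.length_range, List.length_singleton] at hlen
  exact (ZMod.val_eq_zero j).1 (by omega)

def firstArc (c : ClosedWalk A n) : Arc A := ⟨(c 0, c 1), by simpa using c.adj 0⟩

lemma firstArc_injective (hgeo : KGeodetic A k) :
    Function.Injective (firstArc : ClosedWalk A (k + 1) → Arc A) := by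
  intro c c' h
  have h0 : c 0 = c' 0 := congrArg (·.1.1) h
  have h1 : c 1 = c' 1 := congrArg (·.1.2) h
  have hk : (1 + k : ZMod (k + 1)) = 0 := by simp [add_comm]
  have hw := c.walkFrom_range 1 k
  have hw' := c'.walkFrom_range 1 k
  rw [hk] at hw hw'
  rw [← h0, ← h1] at hw'
  have hlists := hgeo _ _ _ _ hw hw' (by simp) (by simp)
  ext x
  have hx : x = 1 + ((x - 1).val : ZMod (k + 1)) := by simp
  rw [hx]
  exact List.map_inj_left.1 hlists _ (List.mem_range.2 (ZMod.val_lt _))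

lemma firstArc_surjective (hgeo : KGeodetic A k) (hreach : ∀ u v, A u v → ReachIn A k v u) :
    Function.Surjective (firstArc : ClosedWalk A (k + 1) → Arc A) := by
  rintro ⟨⟨u, v⟩, huv⟩
  obtain ⟨w, hw, hlen⟩ := hreach u v huv
  have hL : WalkFrom A u u (u :: w) := walkFrom_cons huv hw
  obtain ⟨-, hhead, hlast⟩ := hw
  have hlen : w.length = k + 1 := by
    by_contra hne
    have hw_nil : w = [] := by
      simpa using hgeo.eq_singleton_of_walkFrom hL (by simp only [List.length_cons]; omega)
    simp [hw_nil] at hhead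
  set g : ℕ → V := fun j => (u :: w).getD j u
  have hper : g (k + 1) = g 0 := by
    rw [List.getLast?_eq_getElem?, hlen, Nat.add_sub_cancel] at hlast
    simp [g, List.getD_eq_getElem?_getD, hlast]
  have hadj : ∀ j < k + 1, A (g j) (g (j + 1)) := fun j hj => by
    have hj' : j + 1 < (u :: w).length := by simp [hlen]; omega
    simp only [g, List.getD_eq_getElem _ _ hj', List.getD_eq_getElem _ _ (Nat.lt_of_succ_lt hj')]
    exact hL.1.adj_getElem hj'
  refine ⟨ofNat g hper hadj, Subtype.ext (Prod.ext ?_ ?_)⟩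
  · simpa [firstArc, g] using ofNat_apply_natCast hper hadj (j := 0) (by omega)
  · rw [List.head?_eq_getElem?] at hhead
    simpa [firstArc, g, List.getD_eq_getElem?_getD, hhead] using
      ofNat_apply_natCast hper hadj (j := 1) (by omega)

lemma dvd_card_arc (hgeo : KGeodetic A k) (hreach : ∀ u v, A u v → ReachIn A k v u) :
    k + 1 ∣ Nat.card (Arc A) := by
  rw [← Nat.card_eq_of_bijective _ ⟨firstArc_injective hgeo, firstArc_surjective hgeo hreach⟩,
    Nat.card_congr (AddAction.selfEquivOrbitsQuotientProd (stabilizer_eq_bot hgeo)),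
    Nat.card_prod, Nat.card_zmod]
  exact dvd_mul_left _ _

end Geodetic

end ClosedWalk

lemma card_arc_eq_mul {V : Type*} [Fintype V] {A : V → V → Prop} {d : ℕ}
    (hdeg : ∀ u, Set.ncard {w | A u w} = d) : Nat.card (Arc A) = d * Fintype.card V := by
  rw [Nat.card_congr (Equiv.subtypeProdEquivSigmaSubtype fun u v => A u v), Nat.card_sigma]
  have hdeg' : ∀ u, Nat.card {v // A u v} = d := fun u => (Nat.card_coe_set_eq _).trans (hdeg u)
  simp [hdeg', mul_comm]

/-- The walks `o u → u → w` and `o u → o w → w` have length `2 ≤ k`. -/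
lemma KGeodetic.apply_eq_of_adj {V : Type*} {A : V → V → Prop} {k : ℕ} {o : V → V}
    (hgeo : KGeodetic A k) (hk : 2 ≤ k) (hII : ∀ v, A (o v) v)
    (hhom : ∀ a b, A a b → A (o a) (o b)) {u w : V} (huw : A u w) : o w = u := by
  have h := hgeo (o u) w [o u, u, w] [o u, o w, w] ⟨⟨hII u, huw, trivial⟩, rfl, rfl⟩
    ⟨⟨hhom u w huw, hII w, trivial⟩, rfl, rfl⟩ (by simp; omega) (by simp; omega)
  simpa using h.symm

namespace IsOutlierFn

variable {V : Type*} {A : V → V → Prop} {k : ℕ} {o : V → V}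

lemma map_apply (ho : IsOutlierFn A k o) (φ : V ≃ V) (hφ : ∀ a b, A a b ↔ A (φ a) (φ b))
    (u : V) : φ (o u) = o (φ u) := by
  refine (ho (φ u) (φ (o u))).1 fun h => (ho u (o u)).2 rfl ?_
  simpa using h.map φ.symm fun a b hab => (hφ _ _).2 (by simpa using hab)

lemma reachIn_of_adj (ho : IsOutlierFn A k o) (hI : ∀ u, ¬ A (o u) u) {u v : V}
    (huv : A u v) : ReachIn A k v u := by
  by_contra h
  exact hI v ((ho v u).1 h ▸ huv)

end IsOutlierFn

/-- If `G` is a vertex-transitive `(d,k;+1)`-digraph with `d ≥ 2`, then `k+1`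
divides `d·(M(d,k)+1)`. -/
theorem stmt_10 {V : Type*} [Fintype V] (A : V → V → Prop) (d k : ℕ)
    (hd : 2 ≤ d) (hk : 2 ≤ k)
    (hgeo : KGeodetic A k)
    (hdeg : ∀ u : V, Set.ncard {w : V | A u w} = d)
    (hcard : Fintype.card V = mooreBound d k + 1)
    (o : V ≃ V) (ho : IsOutlierFn A k o)
    (hhom : ∀ a b : V, A a b ↔ A (o a) (o b))
    (hvt : ∀ u v : V, ∃ φ : V ≃ V, (∀ a b : V, A a b ↔ A (φ a) (φ b)) ∧ φ u = v) :
    (k + 1) ∣ d * (mooreBound d k + 1) := by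
  have hI : ∀ u, ¬ A (o u) u := by
    intro u hu
    have hII : ∀ v, A (o v) v := fun v => by
      obtain ⟨φ, hφ, rfl⟩ := hvt u v
      simpa [ho.map_apply φ hφ] using (hφ _ _).1 hu
    have hback : ∀ {w}, A u w → o w = u :=
      hgeo.apply_eq_of_adj hk hII fun a b => (hhom a b).1
    obtain ⟨w₁, hw₁, w₂, hw₂, hne⟩ := (Set.one_lt_ncard (Set.toFinite _)).1
      (by rw [hdeg u]; omega : 1 < Set.ncard {w | A u w})
    exact hne (o.injective ((hback hw₁).trans (hback hw₂).symm))
  have hdvd := ClosedWalk.dvd_card_arc hgeo fun u v => ho.reachIn_of_adj hI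
  rwa [card_arc_eq_mul hdeg, hcard] at hdvd
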